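/- The map G → ℤ² × (ℤ/2ℤ)² sending (a,b,c,d) to (a, b, c mod 2, d mod 2) is a surjective group homomorphism whose kernel is exactly the commutator subgroup [G,G]. -/

import Mathlib

/-- The underlying set of the group `G` is `ℤ⁴`. -/
def G : Type := ℤ × ℤ × ℤ × ℤ

namespace G

/-- Build an element of `G` from four integers. -/
def mk (a b c d : ℤ) : G := (a, b, c, d)

/-- The twisted multiplication
`(a,b,c,d)·(a',b',c',d') = (a+a', b+b', c+(−1)^a·c', d+(−1)^a·d')`. -/
def mul' (x y : G) : G :=
  mk (x.1 + y.1) (x.2.1 + y.2.1)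
    (x.2.2.1 + (x.1.negOnePow : ℤ) * y.2.2.1)
    (x.2.2.2 + (x.1.negOnePow : ℤ) * y.2.2.2)

/-- The inverse `(a,b,c,d)⁻¹ = (−a, −b, −(−1)^a·c, −(−1)^a·d)`. -/
def inv' (x : G) : G :=
  mk (-x.1) (-x.2.1) (-((x.1.negOnePow : ℤ) * x.2.2.1)) (-((x.1.negOnePow : ℤ) * x.2.2.2))

instance instGroup : Group G where
  mul := mul'
  one := mk 0 0 0 0
  inv := inv'
  mul_assoc x y z := by
    show mul' (mul' x y) z = mul' x (mul' y z)
    obtain ⟨a, b, c, d⟩ := x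
    obtain ⟨a', b', c', d'⟩ := y
    obtain ⟨a'', b'', c'', d''⟩ := z
    simp only [mul', mk, Int.negOnePow_add, Units.val_mul]
    exact Prod.ext (by ring) (Prod.ext (by ring) (Prod.ext (by ring) (by ring)))
  one_mul x := by
    show mul' (mk 0 0 0 0) x = x
    obtain ⟨a, b, c, d⟩ := x
    simp [mul', mk] <;> rfl
  mul_one x := by
    show mul' x (mk 0 0 0 0) = x
    obtain ⟨a, b, c, d⟩ := x
    simp [mul', mk] <;> rfl
  inv_mul_cancel x := by
    show mul' (inv' x) x = mk 0 0 0 0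
    obtain ⟨a, b, c, d⟩ := x
    simp only [mul', inv', mk, Int.negOnePow_neg]
    exact Prod.ext (by ring) (Prod.ext (by ring) (Prod.ext (by ring) (by ring)))

def g₀ : G := mk 1 0 0 0
def g₁ : G := mk 0 1 0 0
def g₂ : G := mk 0 0 1 0
def g₃ : G := mk 0 0 0 1

end G

/-!
Modulo 2 the twist `(-1)^a` is invisible, so reducing `c` and `d` mod 2 is a homomorphism onto an
abelian group, and its kernel contains `[G, G]`. Conversely the kernel consists of the elements
`(0, 0, 2m, 2n)`, and each of these is the single commutator `⁅(0, 0, m, n), (1, 0, 0, 0)⁆`.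
-/

lemma Int.cast_negOnePow_of_charTwo {R : Type*} [Ring R] [CharP R 2] (n : ℤ) :
    ((n.negOnePow : ℤ) : R) = 1 := by
  rw [Int.coe_negOnePow, CharTwo.neg_eq, one_pow]

open scoped commutatorElement

namespace G

lemma mk_mul (a b c d a' b' c' d' : ℤ) :
    mk a b c d * mk a' b' c' d' =
      mk (a + a') (b + b') (c + (a.negOnePow : ℤ) * c') (d + (a.negOnePow : ℤ) * d') := rfl

lemma mk_inv (a b c d : ℤ) :
    (mk a b c d)⁻¹ = mk (-a) (-b) (-((a.negOnePow : ℤ) * c)) (-((a.negOnePow : ℤ) * d)) := rfl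

lemma commutatorElement_mk_g₀ (c d : ℤ) : ⁅mk 0 0 c d, g₀⁆ = mk 0 0 (c + c) (d + d) := by
  simp only [commutatorElement_def, g₀, mk_mul, mk_inv]
  norm_num

def abelianizationHom : G →* Multiplicative (ℤ × ℤ × ZMod 2 × ZMod 2) where
  toFun x := Multiplicative.ofAdd (x.1, x.2.1, (x.2.2.1 : ZMod 2), (x.2.2.2 : ZMod 2))
  map_one' := rfl
  map_mul' := by
    rintro ⟨a, b, c, d⟩ ⟨a', b', c', d'⟩
    change Multiplicative.ofAdd (a + a', b + b', ((c + (a.negOnePow : ℤ) * c' : ℤ) : ZMod 2),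
      ((d + (a.negOnePow : ℤ) * d' : ℤ) : ZMod 2)) = Multiplicative.ofAdd (_ + _)
    simp only [Int.cast_add, Int.cast_mul, Int.cast_negOnePow_of_charTwo, one_mul]
    rfl

lemma abelianizationHom_mk (a b c d : ℤ) :
    abelianizationHom (mk a b c d) = Multiplicative.ofAdd (a, b, (c : ZMod 2), (d : ZMod 2)) :=
  rfl

lemma abelianizationHom_surjective : Function.Surjective abelianizationHom := by
  rintro ⟨a, b, c, d⟩
  obtain ⟨c, rfl⟩ := ZMod.intCast_surjective c
  obtain ⟨d, rfl⟩ := ZMod.intCast_surjective d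
  exact ⟨mk a b c d, rfl⟩

lemma ker_abelianizationHom_le_commutator : abelianizationHom.ker ≤ commutator G := by
  rintro ⟨a, b, c, d⟩ hx
  have h : ((a, b, (c : ZMod 2), (d : ZMod 2)) : ℤ × ℤ × ZMod 2 × ZMod 2) = 0 := hx
  simp only [Prod.mk_eq_zero, ZMod.intCast_eq_zero_iff_even] at h
  obtain ⟨rfl, rfl, ⟨m, rfl⟩, ⟨n, rfl⟩⟩ := h
  change mk 0 0 (m + m) (n + n) ∈ _
  rw [← commutatorElement_mk_g₀ m n, commutator_def]
  exact Subgroup.commutator_mem_commutator (Subgroup.mem_top _) (Subgroup.mem_top _)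

end G

/-- The map `G → ℤ² × (ℤ/2ℤ)²`, `(a,b,c,d) ↦ (a, b, c mod 2, d mod 2)`, is a surjective
group homomorphism whose kernel is exactly the commutator subgroup `[G,G]`. -/
theorem G_abelianization_hom :
    ∃ f : G →* Multiplicative (ℤ × ℤ × ZMod 2 × ZMod 2),
      (∀ a b c d : ℤ,
        f (G.mk a b c d) = Multiplicative.ofAdd (a, b, (c : ZMod 2), (d : ZMod 2))) ∧
      Function.Surjective f ∧
      f.ker = commutator G :=
  ⟨G.abelianizationHom, G.abelianizationHom_mk, G.abelianizationHom_surjective,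
    le_antisymm G.ker_abelianizationHom_le_commutator (Abelianization.commutator_subset_ker _)⟩
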